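/- Let (F_k)_{k∈K} be a finite family of triangular faces with vertex list r : ι → ℝ³ (ι finite), and let V(r) = (1/6) Σ_F r_{F₀} · (r_{F₁} × r_{F₂}). Then Σ_{a∈ι} r_a ⊗ ∇_{r_a} V = V · I, where the gradient ∇_{r_a} V accounts for all occurrences of the vertex a among the faces and I is the 3×3 identity matrix. -/

import Mathlib

open Matrix BigOperators

/-- The enclosed signed volume of a triangulated surface with faces `F` and vertex list `r`:
`V = (1/6) ∑_F r_{F₀} · (r_{F₁} ⨯₃ r_{F₂})`. -/
noncomputable def polyVol {K ι : Type*} [Fintype K] (F : K → ι × ι × ι)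
    (r : ι → Fin 3 → ℝ) : ℝ :=
  (1 / 6 : ℝ) * ∑ k : K, r (F k).1 ⬝ᵥ (crossProduct (r (F k).2.1) (r (F k).2.2))

/-- The gradient of a scalar function of a single point of `ℝ³`. -/
noncomputable def grad3 (f : (Fin 3 → ℝ) → ℝ) (x : Fin 3 → ℝ) : Fin 3 → ℝ :=
  fun i => fderiv ℝ f x (Pi.single i 1)

/-- The gradient of a scalar function of a family of points with respect to the vertex `a`;
it accounts for all occurrences of the vertex `a` among the faces. -/
noncomputable def vgrad {ι : Type*} [DecidableEq ι] (f : (ι → Fin 3 → ℝ) → ℝ)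
    (r : ι → Fin 3 → ℝ) (a : ι) : Fin 3 → ℝ :=
  grad3 (fun x => f (Function.update r a x)) (r a)

noncomputable def clm1 (c : Fin 3 → ℝ) : (Fin 3 → ℝ) →L[ℝ] ℝ :=
  LinearMap.toContinuousLinearMap
    { toFun := fun x => x ⬝ᵥ c
      map_add' := fun x y => add_dotProduct x y c
      map_smul' := fun m x => by simp [smul_dotProduct] }

noncomputable def clm2 (u w : Fin 3 → ℝ) : (Fin 3 → ℝ) →L[ℝ] ℝ :=
  LinearMap.toContinuousLinearMap
    { toFun := fun x => u ⬝ᵥ (x ⨯₃ w)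
      map_add' := fun x y => by simp [map_add, dotProduct_add]
      map_smul' := fun m x => by simp [_root_.map_smul, dotProduct_smul] }

noncomputable def clm3 (u v : Fin 3 → ℝ) : (Fin 3 → ℝ) →L[ℝ] ℝ :=
  LinearMap.toContinuousLinearMap
    { toFun := fun x => u ⬝ᵥ (v ⨯₃ x)
      map_add' := fun x y => by simp [map_add, dotProduct_add]
      map_smul' := fun m x => by simp [_root_.map_smul, dotProduct_smul] }

lemma clm1_apply (c x : Fin 3 → ℝ) : clm1 c x = x ⬝ᵥ c := rfl
lemma clm2_apply (u w x : Fin 3 → ℝ) : clm2 u w x = u ⬝ᵥ (x ⨯₃ w) := rfl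
lemma clm3_apply (u v x : Fin 3 → ℝ) : clm3 u v x = u ⬝ᵥ (v ⨯₃ x) := rfl

lemma trip_swap12 (u v w : Fin 3 → ℝ) : u ⬝ᵥ (v ⨯₃ w) + v ⬝ᵥ (u ⨯₃ w) = 0 := by
  simp [cross_apply, dotProduct, Fin.sum_univ_three]; ring

lemma trip_swap13 (u v w : Fin 3 → ℝ) : u ⬝ᵥ (v ⨯₃ w) + w ⬝ᵥ (v ⨯₃ u) = 0 := by
  simp [cross_apply, dotProduct, Fin.sum_univ_three]; ring

lemma face_hasFDerivAt {ι : Type*} [DecidableEq ι] (r : ι → Fin 3 → ℝ) (a i j l : ι) :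
    HasFDerivAt (fun x => (Function.update r a x i) ⬝ᵥ
        ((Function.update r a x j) ⨯₃ (Function.update r a x l)))
      ((if i = a then clm1 (r j ⨯₃ r l) else 0) + (if j = a then clm2 (r i) (r l) else 0)
        + (if l = a then clm3 (r i) (r j) else 0)) (r a) := by
  by_cases hi : i = a <;> by_cases hj : j = a <;> by_cases hl : l = a
  · -- i, j, l = a : f x = x ⬝ᵥ (x ⨯₃ x) = 0
    subst hi; subst hj; subst hl
    simp only [eq_self_iff_true, if_true, Function.update_self]
    have hL : clm1 (r l ⨯₃ r l) + clm2 (r l) (r l) + clm3 (r l) (r l) = 0 := by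
      ext x; simp [clm1_apply, clm2_apply, clm3_apply]
    have hf : (fun x : Fin 3 → ℝ => x ⬝ᵥ (x ⨯₃ x)) = fun _ => (0:ℝ) := by
      funext x; simp
    rw [hL, hf]; exact hasFDerivAt_const _ _
  · -- i, j = a : f x = x ⬝ᵥ (x ⨯₃ r l) = 0
    subst hi; subst hj
    simp only [eq_self_iff_true, if_true, if_neg hl, add_zero, Function.update_self,
      Function.update_of_ne hl]
    have hL : clm1 (r j ⨯₃ r l) + clm2 (r j) (r l) = 0 := by
      ext x
      simpa [clm1_apply, clm2_apply] using trip_swap12 x (r j) (r l)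
    have hf : (fun x : Fin 3 → ℝ => x ⬝ᵥ (x ⨯₃ r l)) = fun _ => (0:ℝ) := by
      funext x; simp
    rw [hL, hf]; exact hasFDerivAt_const _ _
  · -- i, l = a : f x = x ⬝ᵥ (r j ⨯₃ x) = 0
    subst hi; subst hl
    simp only [eq_self_iff_true, if_true, if_neg hj, add_zero, zero_add, Function.update_self,
      Function.update_of_ne hj]
    have hL : clm1 (r j ⨯₃ r l) + clm3 (r l) (r j) = 0 := by
      ext x
      simpa [clm1_apply, clm3_apply] using trip_swap13 x (r j) (r l)
    have hf : (fun x : Fin 3 → ℝ => x ⬝ᵥ (r j ⨯₃ x)) = fun _ => (0:ℝ) := by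
      funext x; simp
    rw [hL, hf]; exact hasFDerivAt_const _ _
  · -- i = a : linear
    subst hi
    simp only [eq_self_iff_true, if_true, if_neg hj, if_neg hl, add_zero, Function.update_self,
      Function.update_of_ne hj, Function.update_of_ne hl]
    exact (clm1 (r j ⨯₃ r l)).hasFDerivAt
  · -- j, l = a : f x = r i ⬝ᵥ (x ⨯₃ x) = 0
    subst hj; subst hl
    simp only [eq_self_iff_true, if_true, if_neg hi, zero_add, Function.update_self,
      Function.update_of_ne hi]
    have hL : clm2 (r i) (r l) + clm3 (r i) (r l) = 0 := by
      ext x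
      have h0 : x ⨯₃ r l + r l ⨯₃ x = 0 := cross_anticomm' x (r l)
      simp only [ContinuousLinearMap.add_apply, ContinuousLinearMap.zero_apply,
        clm2_apply, clm3_apply, ← dotProduct_add, h0, dotProduct_zero]
    have hf : (fun x : Fin 3 → ℝ => r i ⬝ᵥ (x ⨯₃ x)) = fun _ => (0:ℝ) := by
      funext x; simp
    rw [hL, hf]; exact hasFDerivAt_const _ _
  · -- j = a : linear
    subst hj
    simp only [eq_self_iff_true, if_true, if_neg hi, if_neg hl, zero_add, add_zero,
      Function.update_self, Function.update_of_ne hi, Function.update_of_ne hl]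
    exact (clm2 (r i) (r l)).hasFDerivAt
  · -- l = a : linear
    subst hl
    simp only [eq_self_iff_true, if_true, if_neg hi, if_neg hj, zero_add, Function.update_self,
      Function.update_of_ne hi, Function.update_of_ne hj]
    exact (clm3 (r i) (r j)).hasFDerivAt
  · -- none : constant
    simp only [if_neg hi, if_neg hj, if_neg hl, add_zero, Function.update_of_ne hi,
      Function.update_of_ne hj, Function.update_of_ne hl]
    exact hasFDerivAt_const _ _

lemma clm1_single (c : Fin 3 → ℝ) (m : Fin 3) : clm1 c (Pi.single m 1) = c m := by
  simp [clm1_apply, single_dotProduct]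

lemma clm2_single (u w : Fin 3 → ℝ) (m : Fin 3) : clm2 u w (Pi.single m 1) = (w ⨯₃ u) m := by
  rw [clm2_apply, triple_product_permutation, single_dotProduct, one_mul]

lemma clm3_single (u v : Fin 3 → ℝ) (m : Fin 3) : clm3 u v (Pi.single m 1) = (u ⨯₃ v) m := by
  rw [clm3_apply, triple_product_permutation, triple_product_permutation,
    single_dotProduct, one_mul]

lemma vgrad_polyVol {K ι : Type*} [Fintype K] [DecidableEq ι] (F : K → ι × ι × ι)
    (r : ι → Fin 3 → ℝ) (a : ι) :
    vgrad (fun s => polyVol F s) r a = fun m => (1/6 : ℝ) * ∑ k : K,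
      ((if (F k).1 = a then (r (F k).2.1 ⨯₃ r (F k).2.2) m else 0)
        + (if (F k).2.1 = a then (r (F k).2.2 ⨯₃ r (F k).1) m else 0)
        + (if (F k).2.2 = a then (r (F k).1 ⨯₃ r (F k).2.1) m else 0)) := by
  have H : HasFDerivAt (fun x => polyVol F (Function.update r a x))
      ((1/6 : ℝ) • ∑ k : K,
        ((if (F k).1 = a then clm1 (r (F k).2.1 ⨯₃ r (F k).2.2) else 0)
          + (if (F k).2.1 = a then clm2 (r (F k).1) (r (F k).2.2) else 0)
          + (if (F k).2.2 = a then clm3 (r (F k).1) (r (F k).2.1) else 0))) (r a) := by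
    unfold polyVol
    exact HasFDerivAt.const_mul
      (HasFDerivAt.fun_sum fun k _ => face_hasFDerivAt r a (F k).1 (F k).2.1 (F k).2.2) _
  funext m
  show fderiv ℝ (fun x => polyVol F (Function.update r a x)) (r a) (Pi.single m 1) = _
  rw [H.fderiv]
  simp only [ContinuousLinearMap.smul_apply, ContinuousLinearMap.sum_apply,
    ContinuousLinearMap.add_apply, smul_eq_mul]
  congr 1
  refine Finset.sum_congr rfl fun k _ => ?_
  congr 1
  · congr 1
    · split <;> simp [clm1_single]
    · split <;> simp [clm2_single]
  · split <;> simp [clm3_single]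

lemma key3 (u v w : Fin 3 → ℝ) (i j : Fin 3) :
    u i * (v ⨯₃ w) j + v i * (w ⨯₃ u) j + w i * (u ⨯₃ v) j
      = (u ⬝ᵥ (v ⨯₃ w)) * (if i = j then 1 else 0) := by
  fin_cases i <;> fin_cases j <;>
    simp [cross_apply, dotProduct, Fin.sum_univ_three] <;> ring

/-- For any finite family of triangular faces with finite vertex list,
`∑_a r_a ⊗ ∇_{r_a} V = V · I`. -/
theorem stmt9 {K ι : Type*} [Fintype K] [Fintype ι] [DecidableEq ι]
    (F : K → ι × ι × ι) (r : ι → Fin 3 → ℝ) :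
    ∑ a : ι, vecMulVec (r a) (vgrad (fun s => polyVol F s) r a)
      = polyVol F r • (1 : Matrix (Fin 3) (Fin 3) ℝ) := by
  ext i j
  simp only [Matrix.sum_apply, Matrix.vecMulVec_apply, vgrad_polyVol, Matrix.smul_apply,
    Matrix.one_apply, smul_eq_mul]
  have h1 : ∀ a : ι, r a i * ((1/6 : ℝ) * ∑ k : K,
      ((if (F k).1 = a then (r (F k).2.1 ⨯₃ r (F k).2.2) j else 0)
        + (if (F k).2.1 = a then (r (F k).2.2 ⨯₃ r (F k).1) j else 0)
        + (if (F k).2.2 = a then (r (F k).1 ⨯₃ r (F k).2.1) j else 0)))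
      = ∑ k : K, (1/6 : ℝ) *
      ((if (F k).1 = a then r a i * (r (F k).2.1 ⨯₃ r (F k).2.2) j else 0)
        + (if (F k).2.1 = a then r a i * (r (F k).2.2 ⨯₃ r (F k).1) j else 0)
        + (if (F k).2.2 = a then r a i * (r (F k).1 ⨯₃ r (F k).2.1) j else 0)) := by
    intro a
    rw [Finset.mul_sum, Finset.mul_sum]
    refine Finset.sum_congr rfl fun k _ => ?_
    simp only [mul_add, mul_ite, mul_zero]
    ring_nf
  simp only [h1]
  rw [Finset.sum_comm]
  have h2 : ∀ k : K, ∑ a : ι, ((1/6 : ℝ) *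
      ((if (F k).1 = a then r a i * (r (F k).2.1 ⨯₃ r (F k).2.2) j else 0)
        + (if (F k).2.1 = a then r a i * (r (F k).2.2 ⨯₃ r (F k).1) j else 0)
        + (if (F k).2.2 = a then r a i * (r (F k).1 ⨯₃ r (F k).2.1) j else 0)))
      = (1/6 : ℝ) * ((r (F k).1 ⬝ᵥ (r (F k).2.1 ⨯₃ r (F k).2.2)) * (if i = j then 1 else 0)) := by
    intro k
    rw [← Finset.mul_sum]
    congr 1
    rw [Finset.sum_add_distrib, Finset.sum_add_distrib]
    simp only [Finset.sum_ite_eq, Finset.mem_univ, if_true]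
    exact key3 _ _ _ i j
  simp only [h2]
  simp only [← mul_assoc]
  rw [← Finset.sum_mul, ← Finset.mul_sum, polyVol]
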